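/- Let x⁽¹⁾,…,x⁽ⁿ⁺¹⁾ be points in the closed unit ball of ℝⁿ, let 1 ≤ m ≤ n, r = (1/m)√(m − m(m−1)/n), c their centroid, and for each m-element subset J set y_J = c + (1/r)(c − (1/m)Σ_{j∈J} x⁽ʲ⁾). Then there exists an m-element subset J with ‖y_J‖ ≤ 1. -/

import Mathlib

/-!
Average over all `m`-subsets `J`. With `z j = x j - c` one has `y_J = c - (r m)⁻¹ • ∑ j ∈ J, z j`
and `∑ j, z j = 0`, so the cross terms `⟪c, ∑ j ∈ J, z j⟫` sum to zero over `J`, while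
`‖∑ j ∈ J, z j‖² = -∑ i ∈ J, ∑ j ∉ J, ⟪z i, z j⟫` and every ordered pair `i ≠ j` is split by
`(n - 1).choose (m - 1)` subsets, giving
`∑ J, ‖∑ j ∈ J, z j‖² = (n - 1).choose (m - 1) * ∑ j, ‖z j‖²`.
The value of `r` is exactly the one for which the mean of `‖y_J‖²` equals the mean of `‖x j‖²`,
which is at most `1`; hence some `‖y_J‖ ≤ 1`.
-/

open Finset
open scoped InnerProductSpace

namespace Finset

variable {ι M : Type*} [DecidableEq ι]

theorem card_filter_mem_powersetCard {s : Finset ι} {i : ι} (hi : i ∈ s) {m : ℕ} (hm : 1 ≤ m) :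
    #{J ∈ s.powersetCard m | i ∈ J} = (#s - 1).choose (m - 1) := by
  simpa using card_filter_powersetCard_subset {i} s m (by simpa) (by simpa)

theorem card_filter_mem_notMem_powersetCard {s : Finset ι} {i j : ι} (hi : i ∈ s) (hj : j ∈ s)
    (hij : i ≠ j) {m : ℕ} (hm : 1 ≤ m) :
    #{J ∈ s.powersetCard m | i ∈ J ∧ j ∉ J} = (#s - 2).choose (m - 1) := by
  have : {J ∈ s.powersetCard m | i ∈ J ∧ j ∉ J} = {J ∈ (s.erase j).powersetCard m | i ∈ J} := by
    ext J
    simp only [mem_filter, mem_powersetCard, subset_erase]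
    tauto
  rw [this, card_filter_mem_powersetCard (mem_erase.2 ⟨hij, hi⟩) hm, card_erase_of_mem hj]
  rfl

theorem sum_powersetCard_sum [AddCommMonoid M] (s : Finset ι) {m : ℕ} (hm : 1 ≤ m) (f : ι → M) :
    ∑ J ∈ s.powersetCard m, ∑ j ∈ J, f j = (#s - 1).choose (m - 1) • ∑ j ∈ s, f j := by
  rw [sum_comm' (t' := s) (s' := fun j ↦ {J ∈ s.powersetCard m | j ∈ J}), smul_sum]
  · refine sum_congr rfl fun j hj ↦ ?_
    rw [sum_const, card_filter_mem_powersetCard hj hm]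
  · intro J j
    simp only [mem_filter, mem_powersetCard]
    exact ⟨fun h ↦ ⟨h, h.1.1 h.2⟩, fun h ↦ h.1⟩

theorem sum_powersetCard_sum_sum_sdiff [AddCommMonoid M] (s : Finset ι) {m : ℕ} (hm : 1 ≤ m)
    (g : ι → ι → M) :
    ∑ J ∈ s.powersetCard m, ∑ i ∈ J, ∑ j ∈ s \ J, g i j
      = (#s - 2).choose (m - 1) • ∑ i ∈ s, ∑ j ∈ s.erase i, g i j := by
  rw [sum_comm' (t' := s) (s' := fun i ↦ {J ∈ s.powersetCard m | i ∈ J}), smul_sum]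
  · refine sum_congr rfl fun i hi ↦ ?_
    rw [sum_comm' (t' := s.erase i) (s' := fun j ↦ {J ∈ s.powersetCard m | i ∈ J ∧ j ∉ J}),
      smul_sum]
    · refine sum_congr rfl fun j hj ↦ ?_
      rw [sum_const, card_filter_mem_notMem_powersetCard hi (mem_of_mem_erase hj)
        (ne_of_mem_erase hj).symm hm]
    · intro J j
      simp only [mem_filter, mem_sdiff, mem_erase]
      constructor
      · rintro ⟨⟨hJ, hiJ⟩, hjs, hjJ⟩
        exact ⟨⟨hJ, hiJ, hjJ⟩, fun hji ↦ hjJ (hji ▸ hiJ), hjs⟩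
      · rintro ⟨⟨hJ, hiJ, hjJ⟩, -, hjs⟩
        exact ⟨⟨hJ, hiJ⟩, hjs, hjJ⟩
  · intro J i
    simp only [mem_filter, mem_powersetCard]
    exact ⟨fun h ↦ ⟨h, h.1.1 h.2⟩, fun h ↦ h.1⟩

end Finset

variable {ι E : Type*} [NormedAddCommGroup E] [InnerProductSpace ℝ E]

theorem sum_sub_eq_zero_of_card_smul_eq_sum (s : Finset ι) (x : ι → E) {c : E}
    (hc : (#s : ℝ) • c = ∑ j ∈ s, x j) : ∑ j ∈ s, (x j - c) = 0 := by
  rw [sum_sub_distrib, sum_const, ← Nat.cast_smul_eq_nsmul ℝ, hc, sub_self]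

theorem sum_norm_sub_sq_of_card_smul_eq_sum (s : Finset ι) (x : ι → E) {c : E}
    (hc : (#s : ℝ) • c = ∑ j ∈ s, x j) :
    ∑ j ∈ s, ‖x j - c‖ ^ 2 = ∑ j ∈ s, ‖x j‖ ^ 2 - #s * ‖c‖ ^ 2 := by
  simp_rw [norm_sub_sq_real]
  rw [sum_add_distrib, sum_sub_distrib, ← mul_sum, ← sum_inner, ← hc, real_inner_smul_left,
    real_inner_self_eq_norm_sq, sum_const, nsmul_eq_mul]
  ring

theorem add_inv_smul_sub_inv_card_smul_sum {V : Type*} [AddCommGroup V] [Module ℝ V] (J : Finset ι)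
    (hJ : J.Nonempty) (x : ι → V) (c : V) (r : ℝ) :
    c + r⁻¹ • (c - (#J : ℝ)⁻¹ • ∑ j ∈ J, x j) = c - (r * #J)⁻¹ • ∑ j ∈ J, (x j - c) := by
  have hJ : (#J : ℝ) ≠ 0 := by exact_mod_cast hJ.card_ne_zero
  rw [sum_sub_distrib, sum_const, ← Nat.cast_smul_eq_nsmul ℝ]
  match_scalars <;> field_simp
  ring

variable [DecidableEq ι]

theorem sum_powersetCard_norm_sq_sum_of_sum_eq_zero (s : Finset ι) {m : ℕ} (hm : 1 ≤ m)
    {z : ι → E} (hz : ∑ j ∈ s, z j = 0) :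
    ∑ J ∈ s.powersetCard m, ‖∑ j ∈ J, z j‖ ^ 2 = (#s - 2).choose (m - 1) * ∑ j ∈ s, ‖z j‖ ^ 2 := by
  have hJ : ∀ J ∈ s.powersetCard m,
      ‖∑ j ∈ J, z j‖ ^ 2 = -∑ i ∈ J, ∑ j ∈ s \ J, ⟪z i, z j⟫_ℝ := by
    intro J hJ
    have hcompl : ∑ j ∈ J, z j = -∑ j ∈ s \ J, z j := by
      rw [eq_neg_iff_add_eq_zero, add_comm, sum_sdiff (mem_powersetCard.1 hJ).1, hz]
    rw [← real_inner_self_eq_norm_sq]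
    nth_rw 2 [hcompl]
    simp_rw [inner_neg_right, sum_inner, inner_sum]
  have hi : ∀ i ∈ s, ∑ j ∈ s.erase i, ⟪z i, z j⟫_ℝ = -‖z i‖ ^ 2 := by
    intro i hi
    rw [sum_erase_eq_sub hi, ← inner_sum, hz, inner_zero_right, real_inner_self_eq_norm_sq,
      zero_sub]
  rw [sum_congr rfl hJ, sum_neg_distrib, sum_powersetCard_sum_sum_sdiff s hm, sum_congr rfl hi,
    sum_neg_distrib, nsmul_eq_mul]
  ring

theorem sum_powersetCard_norm_sq_sub_smul_sum_sub (s : Finset ι) {m : ℕ} (hm : 1 ≤ m)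
    (x : ι → E) {c : E} (hc : (#s : ℝ) • c = ∑ j ∈ s, x j) (a : ℝ) :
    ∑ J ∈ s.powersetCard m, ‖c - a • ∑ j ∈ J, (x j - c)‖ ^ 2
      = (#s).choose m * ‖c‖ ^ 2
        + a ^ 2 * (#s - 2).choose (m - 1) * (∑ j ∈ s, ‖x j‖ ^ 2 - #s * ‖c‖ ^ 2) := by
  have hz := sum_sub_eq_zero_of_card_smul_eq_sum s x hc
  have hcross : ∑ J ∈ s.powersetCard m, ⟪c, ∑ j ∈ J, (x j - c)⟫_ℝ = 0 := by
    rw [← inner_sum, sum_powersetCard_sum s hm, hz, smul_zero, inner_zero_right]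
  simp_rw [norm_sub_sq_real, real_inner_smul_right, norm_smul, mul_pow, Real.norm_eq_abs, sq_abs]
  rw [sum_add_distrib, sum_sub_distrib, ← mul_sum, ← mul_sum, ← mul_sum, hcross,
    sum_powersetCard_norm_sq_sum_of_sum_eq_zero s hm hz, sum_norm_sub_sq_of_card_smul_eq_sum s x hc,
    sum_const, card_powersetCard, nsmul_eq_mul]
  ring

theorem Nat.sub_one_choose_mul_mul_succ (n : ℕ) {m : ℕ} (hm : 1 ≤ m) :
    (n - 1).choose (m - 1) * (n * (n + 1)) = (n + 1).choose m * (m * (n + 1 - m)) := by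
  obtain ⟨k, rfl⟩ : ∃ k, m = k + 1 := ⟨m - 1, by omega⟩
  rcases n with _ | p
  · simp
  calc p.choose k * ((p + 1) * (p + 2)) = p.choose k * (p + 1) * (p + 2) := by ring
    _ = (p + 2) * (p + 1).choose k * (p + 1 - k) := by rw [Nat.choose_mul_succ_eq]; ring
    _ = (p + 2).choose (k + 1) * ((k + 1) * (p + 1 + 1 - (k + 1))) := by
      rw [Nat.add_one_mul_choose_eq]; simp only [Nat.add_sub_add_right]; ring

theorem sum_powersetCard_norm_sq_add_inv_smul_sub (s : Finset ι) {m n : ℕ} (hm : 1 ≤ m)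
    (hmn : m ≤ n) (hs : #s = n + 1) (x : ι → E) {c : E} (hc : (#s : ℝ) • c = ∑ j ∈ s, x j)
    {r : ℝ} (hr : (r * m) ^ 2 = m * (n + 1 - m) / n) :
    ∑ J ∈ s.powersetCard m, ‖c + r⁻¹ • (c - (m : ℝ)⁻¹ • ∑ j ∈ J, x j)‖ ^ 2
      = (n + 1).choose m / (n + 1) * ∑ j ∈ s, ‖x j‖ ^ 2 := by
  have hterm : ∀ J ∈ s.powersetCard m, c + r⁻¹ • (c - (m : ℝ)⁻¹ • ∑ j ∈ J, x j)
      = c - (r * m)⁻¹ • ∑ j ∈ J, (x j - c) := by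
    intro J hJ
    obtain ⟨-, hJm⟩ := mem_powersetCard.1 hJ
    rw [← hJm]
    exact add_inv_smul_sub_inv_card_smul_sum J (card_pos.1 (by omega)) x c r
  have hchoose : ((n - 1).choose (m - 1) : ℝ) * (n * (n + 1))
      = (n + 1).choose m * (m * (n + 1 - m)) := by
    have h := Nat.sub_one_choose_mul_mul_succ n hm
    rw [← Nat.cast_inj (R := ℝ)] at h
    push_cast [Nat.cast_sub (by omega : m ≤ n + 1)] at h
    exact h
  have hn : (0 : ℝ) < n := by exact_mod_cast (by omega : 0 < n)
  have hnm : (0 : ℝ) < n + 1 - m := by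
    have : (m : ℝ) ≤ n := by exact_mod_cast hmn
    linarith
  have hscalar : ((r * m)⁻¹) ^ 2 * (n - 1).choose (m - 1) = (n + 1).choose m / (n + 1) := by
    rw [inv_pow, hr]
    field_simp
    linear_combination hchoose
  rw [sum_congr rfl fun J hJ ↦ by rw [hterm J hJ],
    sum_powersetCard_norm_sq_sub_smul_sum_sub s hm x hc, hs, show n + 1 - 2 = n - 1 by omega, hscalar]
  push_cast
  field_simp
  ring

theorem stmt11 (m n : ℕ) (hm : 1 ≤ m) (hmn : m ≤ n)
    (x : Fin (n + 1) → EuclideanSpace ℝ (Fin n)) (hx : ∀ j, ‖x j‖ ≤ 1)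
    (c : EuclideanSpace ℝ (Fin n)) (hc : c = ((n : ℝ) + 1)⁻¹ • ∑ j, x j)
    (r : ℝ) (hr : r = (1 / (m : ℝ)) * Real.sqrt ((m : ℝ) - m * (m - 1) / n)) :
    ∃ J ∈ Finset.powersetCard m (Finset.univ : Finset (Fin (n + 1))),
      ‖c + r⁻¹ • (c - (m : ℝ)⁻¹ • ∑ j ∈ J, x j)‖ ≤ 1 := by
  have hn : (0 : ℝ) < n := by exact_mod_cast (by omega : 0 < n)
  have hm0 : (m : ℝ) ≠ 0 := by positivity
  have hrm : (r * m) ^ 2 = m * (n + 1 - m) / n := by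
    have hmn' : (m : ℝ) ≤ n := by exact_mod_cast hmn
    have hrad : (m : ℝ) - m * (m - 1) / n = m * (n + 1 - m) / n := by
      field_simp
      ring
    rw [hr, hrad, one_div, mul_comm, ← mul_assoc, mul_inv_cancel₀ hm0, one_mul,
      Real.sq_sqrt (div_nonneg (mul_nonneg m.cast_nonneg (by linarith)) hn.le)]
  have hcentroid : (#(univ : Finset (Fin (n + 1))) : ℝ) • c = ∑ j, x j := by
    rw [hc, smul_smul, card_univ, Fintype.card_fin]
    push_cast
    rw [mul_inv_cancel₀ (by positivity), one_smul]
  have hsum := sum_powersetCard_norm_sq_add_inv_smul_sub univ hm hmn (by simp) x hcentroid hrm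
  have hxsq : ∑ j, ‖x j‖ ^ 2 ≤ n + 1 := by
    simpa using sum_le_card_nsmul univ _ 1 fun j _ ↦ pow_le_one₀ (norm_nonneg _) (hx j)
  have hle : ∑ J ∈ powersetCard m univ, ‖c + r⁻¹ • (c - (m : ℝ)⁻¹ • ∑ j ∈ J, x j)‖ ^ 2
      ≤ ∑ J ∈ powersetCard m (univ : Finset (Fin (n + 1))), 1 := by
    rw [hsum, sum_const, card_powersetCard, card_univ, Fintype.card_fin, nsmul_one]
    calc ((n + 1).choose m : ℝ) / (n + 1) * ∑ j, ‖x j‖ ^ 2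
        ≤ (n + 1).choose m / (n + 1) * (n + 1) := by gcongr
      _ = (n + 1).choose m := div_mul_cancel₀ _ (by positivity)
  obtain ⟨J, hJ, hJle⟩ := exists_le_of_sum_le (powersetCard_nonempty.2 (by simp; omega)) hle
  exact ⟨J, hJ, (sq_le_one_iff₀ (norm_nonneg _)).1 hJle⟩
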